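/- arXiv:1403.8113 — 2 statements merged into one kernel-verified Lean document; each statement's English description precedes it below -/
import Mathlib

section
/- Define g : (0, ∞) → ℝ by g(y) = log((1 + √(1+y²))/y) − √(1+y²). There exists a unique c > 0 such that g(c) = 0, i.e. such that √(1+c²) − log((1 + √(1+c²))/c) = 0, and this c satisfies 0.6627 < c < 0.6628. (The eye-shaped region bounded by the principal anti-Stokes lines of the Bessel equation cuts the imaginary η-axis at η = ±ic, with c = 0.66274321….) -/
open Real

private noncomputable def gfun : ℝ → ℝ :=
  fun y => Real.log ((1 + Real.sqrt (1 + y^2)) / y) - Real.sqrt (1 + y^2)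

private lemma sqrt_pos_aux {y : ℝ} : 0 < Real.sqrt (1 + y^2) := by
  apply Real.sqrt_pos.2; positivity

private lemma gfun_anti : StrictAntiOn gfun (Set.Ioi (0:ℝ)) := by
  intro x hx y hy hxy
  simp only [Set.mem_Ioi] at hx hy
  have hsx : 0 < Real.sqrt (1 + x^2) := sqrt_pos_aux
  have hsy : 0 < Real.sqrt (1 + y^2) := sqrt_pos_aux
  have hs_lt : Real.sqrt (1 + x^2) < Real.sqrt (1 + y^2) := by
    apply Real.sqrt_lt_sqrt (by positivity)
    nlinarith
  -- key: x * sqrt(1+y^2) ≤ y * sqrt(1+x^2)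
  have hkey : x * Real.sqrt (1 + y^2) ≤ y * Real.sqrt (1 + x^2) := by
    have h1 : x * Real.sqrt (1 + y^2) = Real.sqrt (x^2 * (1 + y^2)) := by
      rw [Real.sqrt_mul (sq_nonneg x), Real.sqrt_sq hx.le]
    have h2 : y * Real.sqrt (1 + x^2) = Real.sqrt (y^2 * (1 + x^2)) := by
      rw [Real.sqrt_mul (sq_nonneg y), Real.sqrt_sq hy.le]
    rw [h1, h2]
    apply Real.sqrt_le_sqrt
    nlinarith
  have hlog : Real.log ((1 + Real.sqrt (1 + y^2)) / y)
      < Real.log ((1 + Real.sqrt (1 + x^2)) / x) := by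
    apply Real.log_lt_log (by positivity)
    rw [div_lt_div_iff₀ hy hx]
    nlinarith
  unfold gfun
  linarith

private lemma gfun_contOn : ContinuousOn gfun (Set.Icc (0.6627:ℝ) 0.6628) := by
  have h1 : ContinuousOn (fun y : ℝ => (1 + Real.sqrt (1 + y^2)) / y)
      (Set.Icc (0.6627:ℝ) 0.6628) := by
    apply ContinuousOn.div
    · exact (continuous_const.add ((continuous_const.add (continuous_pow 2)).sqrt)).continuousOn
    · exact continuousOn_id
    · intro x hx
      have := hx.1
      norm_num at this ⊢
      linarith
  apply ContinuousOn.sub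
  · apply ContinuousOn.log h1
    intro x hx
    have hx0 : (0:ℝ) < x := lt_of_lt_of_le (by norm_num) hx.1
    have : 0 < Real.sqrt (1 + x^2) := sqrt_pos_aux
    positivity
  · exact ((continuous_const.add (continuous_pow 2)).sqrt).continuousOn

private lemma sum_range8 (x : ℝ) :
    (∑ m ∈ Finset.range 8, x ^ m / m.factorial) =
      1 + x + x^2/2 + x^3/6 + x^4/24 + x^5/120 + x^6/720 + x^7/5040 := by
  simp [Finset.sum_range_succ, Nat.factorial]
  try ring

private lemma gfun_a_pos : 0 < gfun 0.6627 := by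
  unfold gfun
  set s := Real.sqrt (1 + (0.6627:ℝ)^2) with hs
  have hsq : (1:ℝ) + (0.6627:ℝ)^2 = 1.43917129 := by norm_num
  have h1 : (1.1996546:ℝ) ≤ s := by
    rw [hs, hsq, Real.le_sqrt (by norm_num) (by norm_num)]
    norm_num
  have h2 : s ≤ 1.1996547 := by
    rw [hs, hsq]
    calc Real.sqrt 1.43917129 ≤ Real.sqrt ((1.1996547:ℝ)^2) :=
          Real.sqrt_le_sqrt (by norm_num)
      _ = 1.1996547 := Real.sqrt_sq (by norm_num)
  -- exp(1.1996547) < (1 + 1.1996546)/0.6627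
  have hexp : Real.exp 1.1996547 < (1 + 1.1996546) / 0.6627 := by
    have hsplit : Real.exp (1.1996547:ℝ)
        = Real.exp 0.59982735 * Real.exp 0.59982735 := by
      rw [← Real.exp_add]; norm_num
    have hb := Real.exp_bound' (x := (0.59982735:ℝ)) (by norm_num) (by norm_num)
      (n := 8) (by norm_num)
    rw [sum_range8] at hb
    have hb' : Real.exp (0.59982735:ℝ) ≤ 1.8218128 := by
      refine hb.trans ?_
      norm_num [Nat.factorial]
    have hpos : (0:ℝ) < Real.exp 0.59982735 := Real.exp_pos _
    rw [hsplit]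
    calc Real.exp (0.59982735:ℝ) * Real.exp 0.59982735
        ≤ 1.8218128 * 1.8218128 := by nlinarith
      _ < (1 + 1.1996546) / 0.6627 := by norm_num
  have hlog : (1.1996547:ℝ) < Real.log ((1 + s) / 0.6627) := by
    rw [Real.lt_log_iff_exp_lt (by positivity)]
    refine hexp.trans_le ?_
    apply div_le_div_of_nonneg_right ?_ (by norm_num)
    · linarith
  linarith

private lemma gfun_b_neg : gfun 0.6628 < 0 := by
  unfold gfun
  set s := Real.sqrt (1 + (0.6628:ℝ)^2) with hs
  have hsq : (1:ℝ) + (0.6628:ℝ)^2 = 1.43930384 := by norm_num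
  have h1 : (1.1997098:ℝ) ≤ s := by
    rw [hs, hsq, Real.le_sqrt (by norm_num) (by norm_num)]
    norm_num
  have h2 : s ≤ 1.1997099 := by
    rw [hs, hsq]
    calc Real.sqrt 1.43930384 ≤ Real.sqrt ((1.1997099:ℝ)^2) :=
          Real.sqrt_le_sqrt (by norm_num)
      _ = 1.1997099 := Real.sqrt_sq (by norm_num)
  -- (1 + 1.1997099)/0.6628 < exp(1.1997098)
  have hexp : (1 + 1.1997099) / 0.6628 < Real.exp 1.1997098 := by
    have hsplit : Real.exp (1.1997098:ℝ)
        = Real.exp 0.5998549 * Real.exp 0.5998549 := by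
      rw [← Real.exp_add]; norm_num
    have hb := Real.sum_le_exp_of_nonneg (x := (0.5998549:ℝ)) (by norm_num) 8
    rw [sum_range8] at hb
    have hb' : (1.8218539:ℝ) ≤ Real.exp 0.5998549 := by
      refine le_trans ?_ hb
      norm_num
    rw [hsplit]
    calc (1 + 1.1997099 : ℝ) / 0.6628 < 1.8218539 * 1.8218539 := by norm_num
      _ ≤ Real.exp 0.5998549 * Real.exp 0.5998549 := by nlinarith [Real.exp_pos (0.5998549:ℝ)]
  have hlog : Real.log ((1 + s) / 0.6628) < 1.1997098 := by
    have hspos : (0:ℝ) < s := sqrt_pos_aux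
    rw [Real.log_lt_iff_lt_exp (div_pos (by linarith) (by norm_num))]
    refine lt_of_le_of_lt ?_ hexp
    apply div_le_div_of_nonneg_right ?_ (by norm_num)
    · linarith
  linarith

/-- There is a unique `c > 0` with `log((1 + √(1+c²))/c) - √(1+c²) = 0`
(equivalently `√(1+c²) - log((1 + √(1+c²))/c) = 0`), and it satisfies
`0.6627 < c < 0.6628`. -/
theorem stmt14 :
    ∃ c : ℝ, (0 < c ∧ Real.log ((1 + Real.sqrt (1 + c^2)) / c) - Real.sqrt (1 + c^2) = 0) ∧
      (∀ c' : ℝ, (0 < c' ∧ Real.log ((1 + Real.sqrt (1 + c'^2)) / c') - Real.sqrt (1 + c'^2) = 0)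
        → c' = c) ∧
      Real.sqrt (1 + c^2) - Real.log ((1 + Real.sqrt (1 + c^2)) / c) = 0 ∧
      0.6627 < c ∧ c < 0.6628 := by
  have hab : (0.6627:ℝ) ≤ 0.6628 := by norm_num
  have hIVT := intermediate_value_Icc' hab gfun_contOn
  have h0mem : (0:ℝ) ∈ Set.Icc (gfun 0.6628) (gfun 0.6627) :=
    ⟨gfun_b_neg.le, gfun_a_pos.le⟩
  obtain ⟨c, hcmem, hc0⟩ := hIVT h0mem
  have hc_pos : (0:ℝ) < c := lt_of_lt_of_le (by norm_num) hcmem.1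
  have hc_ne_a : c ≠ 0.6627 := by
    intro h; rw [h] at hc0; exact gfun_a_pos.ne' hc0
  have hc_ne_b : c ≠ 0.6628 := by
    intro h; rw [h] at hc0; exact gfun_b_neg.ne hc0
  have hc0' : Real.log ((1 + Real.sqrt (1 + c^2)) / c) - Real.sqrt (1 + c^2) = 0 := hc0
  refine ⟨c, ⟨hc_pos, hc0'⟩, ?_, by linarith, lt_of_le_of_ne hcmem.1 (Ne.symm hc_ne_a),
      lt_of_le_of_ne hcmem.2 hc_ne_b⟩
  intro c' ⟨hc'_pos, hc'0⟩
  have : gfun c' = gfun c := by rw [hc0]; exact hc'0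
  exact gfun_anti.injOn (Set.mem_Ioi.2 hc'_pos) (Set.mem_Ioi.2 hc_pos) this
end

section
/- Define f : (0, 1) → ℝ by f(x) = log((1 + √(1−x²))/x) − √(1−x²), and define ζ : (0, 1) → ℝ by ζ(x) = ((3/2) f(x))^{2/3} (real power). Then for every x ∈ (0, 1), f(x) > 0, ζ is differentiable at x with ζ(x) > 0, and the derivative satisfies (ζ'(x))² = (1 − x²)/(ζ(x)·x²). (This is the defining differential relation (dζ/dz̃)² = (1−z̃²)/(ζ z̃²) of the variable ζ in Olver's uniform asymptotic expansions of Bessel functions of large order, verified on the interval 0 < z̃ < 1.) -/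
/-!
Since `f'(t) = -√(1 - t²)/t < 0` on `(0, 1)` and `f 1 = 0`, `f` is positive on `(0, 1)`.
With `u = (3/2) f` we get `ζ' = (2/3) u' u^{-1/3} = f' u^{-1/3}`, so
`ζ'² = f'² / u^{2/3} = (1 - x²) / (x² ζ)`.
-/

open Real Set

noncomputable def olverF (t : ℝ) : ℝ := log ((1 + √(1 - t ^ 2)) / t) - √(1 - t ^ 2)

lemma hasDerivAt_olverF {t : ℝ} (ht0 : 0 < t) (ht1 : t < 1) :
    HasDerivAt olverF (-√(1 - t ^ 2) / t) t := by
  have hpos : 0 < 1 - t ^ 2 := by nlinarith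
  have hs2 : √(1 - t ^ 2) ^ 2 = 1 - t ^ 2 := sq_sqrt hpos.le
  have hsqrt : HasDerivAt (fun t => √(1 - t ^ 2)) (-(2 * t) / (2 * √(1 - t ^ 2))) t := by
    simpa using ((hasDerivAt_pow 2 t).const_sub 1).sqrt hpos.ne'
  have hquot := (((hsqrt.const_add 1).fun_div (hasDerivAt_id' t) ht0.ne').log
    (div_pos (by positivity) ht0).ne').fun_sub hsqrt
  refine hquot.congr_deriv ?_
  field_simp
  linear_combination √(1 - t ^ 2) * hs2

lemma olverF_pos {x : ℝ} (hx0 : 0 < x) (hx1 : x < 1) : 0 < olverF x := by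
  have hcont : ContinuousOn olverF (Icc x 1) := by
    unfold olverF
    fun_prop (disch := intro t ht; have := hx0.trans_le ht.1; positivity)
  have hanti : StrictAntiOn olverF (Icc x 1) := by
    refine strictAntiOn_of_deriv_neg (convex_Icc x 1) hcont fun t ht => ?_
    rw [interior_Icc] at ht
    have ht0 := hx0.trans ht.1
    rw [(hasDerivAt_olverF ht0 ht.2).deriv]
    exact div_neg_of_neg_of_pos (neg_neg_of_pos (sqrt_pos.2 (by nlinarith [ht.2]))) ht0
  simpa [olverF] using hanti ⟨le_rfl, hx1.le⟩ ⟨hx1.le, le_rfl⟩ hx1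

lemma HasDerivAt.rpow_two_thirds {u : ℝ → ℝ} {u' x : ℝ} (hu : HasDerivAt u u' x)
    (hx : 0 < u x) :
    HasDerivAt (fun t => u t ^ (2 / 3 : ℝ)) (2 / 3 * u' / u x ^ (1 / 3 : ℝ)) x := by
  refine (hu.rpow_const (Or.inl hx.ne')).congr_deriv ?_
  rw [show (2 / 3 : ℝ) - 1 = -(1 / 3) by norm_num, rpow_neg hx.le]
  ring

lemma rpow_one_third_sq {a : ℝ} (ha : 0 ≤ a) : (a ^ (1 / 3 : ℝ)) ^ 2 = a ^ (2 / 3 : ℝ) := by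
  rw [← rpow_natCast, ← rpow_mul ha]
  norm_num

/-- With `f(x) = log((1 + √(1-x²))/x) - √(1-x²)` and `ζ(x) = ((3/2) f(x))^{2/3}`
(real power), for every `x ∈ (0,1)`: `f x > 0`, `ζ x > 0`, `ζ` is differentiable
at `x`, and `(ζ'(x))² = (1 - x²)/(ζ(x) x²)`. -/
theorem stmt18 (x : ℝ) (hx : 0 < x) (hx1 : x < 1) :
    let f : ℝ → ℝ := fun t => Real.log ((1 + Real.sqrt (1 - t^2)) / t) - Real.sqrt (1 - t^2)
    let ζ : ℝ → ℝ := fun t => ((3/2) * f t) ^ ((2 : ℝ)/3)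
    0 < f x ∧ 0 < ζ x ∧ DifferentiableAt ℝ ζ x ∧
      (deriv ζ x)^2 = (1 - x^2) / (ζ x * x^2) := by
  intro f ζ
  have hf : 0 < olverF x := olverF_pos hx hx1
  have hζ : HasDerivAt ζ
      (2 / 3 * (3 / 2 * (-√(1 - x ^ 2) / x)) / (3 / 2 * olverF x) ^ (1 / 3 : ℝ)) x :=
    ((hasDerivAt_olverF hx hx1).const_mul (3 / 2)).rpow_two_thirds (by positivity)
  refine ⟨hf, by positivity, hζ.differentiableAt, ?_⟩
  have hd : (2 / 3 * (3 / 2 * (-√(1 - x ^ 2) / x))) ^ 2 = (1 - x ^ 2) / x ^ 2 := by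
    rw [show 2 / 3 * (3 / 2 * (-√(1 - x ^ 2) / x)) = -(√(1 - x ^ 2) / x) by ring, neg_sq,
      div_pow, sq_sqrt (by nlinarith)]
  rw [hζ.deriv, div_pow, hd, rpow_one_third_sq (by positivity), div_div, mul_comm]
  rfl
end
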